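/- arXiv:1302.3077 — 4 statements merged into one kernel-verified Lean document; each statement's English description precedes it below -/
import Mathlib

section
/- Assume the bound conditions: D_min < μ(s) for all s ∈ [s_min, s_in], D_max > μ(s) for all s ∈ [0, s_in], and (s̄, D̄) ∈ [s_min, s_in) × [D_min, D_max]; assume the gain condition G1 > max( max_{s∈[0,s_in]}(−μ'(s)), (D̄ − μ(s_in))/(s_in − s̄) ). Then there exists a unique s_eq ∈ [0, s_in) satisfying μ(s_eq) = sat_{[D_min,D_max]}(D̄ − G1(s_eq − s̄)), and the point (s_eq, s_in − s_eq) is an equilibrium of the closed-loop chemostat, i.e. the right-hand side of the chemostat ODE with input u = sat_{[D_min,D_max]}(D̄ − G1(s − s̄)) vanishes at (s_eq, s_in − s_eq), with s_in − s_eq > 0. -/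
/-!
Writing `u(s) = sat(D̄ - G1 (s - s̄))`, an equilibrium with positive biomass is a root of
`μ(s) = u(s)` in `[0, s_in)`. On `[0, s_in]` the bounds on `μ` rule out both saturated branches
(the lower one only matters for `s ≥ s_min`; below `s_min ≤ s̄` the feedback exceeds `D̄ ≥ D_min`),
so the equation is the linear one `μ(s) + G1 s = D̄ + G1 s̄`. The first gain condition makes
`s ↦ μ(s) + G1 s` strictly increasing, and the second one, together with `μ(0) = 0`, places
`D̄ + G1 s̄` between its values at `0` and `s_in`.
-/

/-- Saturation function `sat_{[Dmin,Dmax]}`. -/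
noncomputable def sat (Dmin Dmax ξ : ℝ) : ℝ :=
  if ξ > Dmax then Dmax else if ξ < Dmin then Dmin else ξ

open Set

lemma sat_eq_iff {Dmin Dmax ξ x : ℝ} (hx : x < Dmax) (hlow : Dmin < x ∨ Dmin ≤ ξ) :
    sat Dmin Dmax ξ = x ↔ ξ = x := by
  unfold sat
  split_ifs with hmax hmin
  · constructor <;> intro h <;> linarith
  · rcases hlow with hlow | hlow <;> constructor <;> intro h <;> linarith
  · exact Iff.rfl

lemma existsUnique_mem_Ico_eq_of_strictMonoOn {f : ℝ → ℝ} {a b y : ℝ} (hab : a ≤ b)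
    (hcont : ContinuousOn f (Icc a b)) (hmono : StrictMonoOn f (Icc a b))
    (hy : y ∈ Ico (f a) (f b)) : ∃! x, x ∈ Ico a b ∧ f x = y := by
  obtain ⟨x, hx, rfl⟩ := intermediate_value_Ico hab hcont hy
  exact ⟨x, ⟨hx, rfl⟩, fun x' ⟨hx', hfx'⟩ =>
    hmono.injOn (Ico_subset_Icc_self hx') (Ico_subset_Icc_self hx) hfx'⟩

lemma strictMonoOn_add_mul_of_neg_deriv_lt {f : ℝ → ℝ} {c a b : ℝ} (hf : Differentiable ℝ f)
    (hderiv : ∀ x ∈ Ioo a b, -deriv f x < c) :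
    StrictMonoOn (fun x => f x + c * x) (Icc a b) := by
  refine strictMonoOn_of_deriv_pos (convex_Icc a b)
    (hf.continuous.add (continuous_const_mul c)).continuousOn fun x hx => ?_
  rw [interior_Icc] at hx
  have hsum : HasDerivAt (fun x => f x + c * x) (deriv f x + c * 1) x :=
    (hf x).hasDerivAt.add ((hasDerivAt_id x).const_mul c)
  rw [hsum.deriv]
  linarith [hderiv x hx]

lemma eq_sat_feedback_iff {μ : ℝ → ℝ} {s_in s_min Dmin Dmax sbar Dbar G1 s : ℝ}
    (hlow : ∀ s ∈ Icc s_min s_in, Dmin < μ s) (hup : ∀ s ∈ Icc 0 s_in, μ s < Dmax)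
    (hsbar : s_min ≤ sbar) (hDbar : Dmin ≤ Dbar) (hG1 : 0 < G1) (hs : s ∈ Icc 0 s_in) :
    μ s = sat Dmin Dmax (Dbar - G1 * (s - sbar)) ↔ μ s + G1 * s = Dbar + G1 * sbar := by
  have hlow' : Dmin < μ s ∨ Dmin ≤ Dbar - G1 * (s - sbar) := by
    rcases le_or_gt s_min s with hs_min | hs_min
    · exact .inl (hlow s ⟨hs_min, hs.2⟩)
    · right
      nlinarith
  rw [eq_comm, sat_eq_iff (hup s hs) hlow']
  constructor <;> intro h <;> linarith

theorem stmt_0_general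
    (μ : ℝ → ℝ) (s_in s_min Dmin Dmax sbar Dbar G1 : ℝ)
    (hμ : ContDiff ℝ 1 μ) (hμ0 : μ 0 = 0)
    (hDmin : 0 ≤ Dmin)
    (hsmin : 0 ≤ s_min)
    (hlow : ∀ s ∈ Set.Icc s_min s_in, Dmin < μ s)
    (hup : ∀ s ∈ Set.Icc 0 s_in, μ s < Dmax)
    (hsbar : sbar ∈ Set.Ico s_min s_in)
    (hDbar : Dbar ∈ Set.Icc Dmin Dmax)
    (hG1 : 0 < G1)
    (hgain1 : ∀ s ∈ Set.Icc 0 s_in, -deriv μ s < G1)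
    (hgain2 : (Dbar - μ s_in) / (s_in - sbar) < G1) :
    ∃! s_eq : ℝ, s_eq ∈ Set.Ico 0 s_in ∧
      μ s_eq = sat Dmin Dmax (Dbar - G1 * (s_eq - sbar)) ∧
      (-(μ s_eq) * (s_in - s_eq)
          + sat Dmin Dmax (Dbar - G1 * (s_eq - sbar)) * (s_in - s_eq) = 0 ∧
       μ s_eq * (s_in - s_eq)
          - sat Dmin Dmax (Dbar - G1 * (s_eq - sbar)) * (s_in - s_eq) = 0 ∧
       0 < s_in - s_eq) := by
  have hsin : 0 ≤ s_in := by linarith [hsbar.1, hsbar.2]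
  have hdiff : Differentiable ℝ μ := hμ.differentiable one_ne_zero
  have hroot : Dbar + G1 * sbar ∈ Ico (μ 0 + G1 * 0) (μ s_in + G1 * s_in) := by
    have hgain2' := (div_lt_iff₀ (sub_pos.2 hsbar.2)).1 hgain2
    constructor <;> nlinarith [hDbar.1, hsbar.1]
  have key : ∀ s ∈ Ico 0 s_in,
      μ s = sat Dmin Dmax (Dbar - G1 * (s - sbar)) ↔ μ s + G1 * s = Dbar + G1 * sbar :=
    fun s hs => eq_sat_feedback_iff hlow hup hsbar.1 hDbar.1 hG1 (Ico_subset_Icc_self hs)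
  obtain ⟨s, ⟨hs, hμs⟩, huniq⟩ := existsUnique_mem_Ico_eq_of_strictMonoOn hsin
    (hdiff.continuous.add (continuous_const_mul G1)).continuousOn
    (strictMonoOn_add_mul_of_neg_deriv_lt hdiff fun x hx => hgain1 x (Ioo_subset_Icc_self hx))
    hroot
  have heq := (key s hs).2 hμs
  refine ⟨s, ⟨hs, heq, by rw [← heq]; ring, by rw [← heq]; ring, sub_pos.2 hs.2⟩, ?_⟩
  rintro y ⟨hy, hμy, -⟩
  exact huniq y ⟨hy, (key y hy).1 hμy⟩

/-- Existence and uniqueness of the equilibrium of the closed-loop chemostat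
with saturated proportional feedback (Proposition 1, equilibrium part). -/
theorem stmt_0
    (μ : ℝ → ℝ) (s_in s_min Dmin Dmax sbar Dbar G1 : ℝ)
    (hμ : ContDiff ℝ 1 μ) (hμ0 : μ 0 = 0)
    (hμpos : ∀ s ∈ Set.Ioc 0 s_in, 0 < μ s)
    (hsin : 0 < s_in)
    (hDmin : 0 ≤ Dmin) (hDD : Dmin < Dmax)
    (hsmin : 0 ≤ s_min) (hsminlt : s_min < s_in)
    (hlow : ∀ s ∈ Set.Icc s_min s_in, Dmin < μ s)
    (hup : ∀ s ∈ Set.Icc 0 s_in, μ s < Dmax)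
    (hsbar : sbar ∈ Set.Ico s_min s_in)
    (hDbar : Dbar ∈ Set.Icc Dmin Dmax)
    (hG1 : 0 < G1)
    (hgain1 : ∀ s ∈ Set.Icc 0 s_in, -deriv μ s < G1)
    (hgain2 : (Dbar - μ s_in) / (s_in - sbar) < G1) :
    ∃! s_eq : ℝ, s_eq ∈ Set.Ico 0 s_in ∧
      μ s_eq = sat Dmin Dmax (Dbar - G1 * (s_eq - sbar)) ∧
      (-(μ s_eq) * (s_in - s_eq)
          + sat Dmin Dmax (Dbar - G1 * (s_eq - sbar)) * (s_in - s_eq) = 0 ∧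
       μ s_eq * (s_in - s_eq)
          - sat Dmin Dmax (Dbar - G1 * (s_eq - sbar)) * (s_in - s_eq) = 0 ∧
       0 < s_in - s_eq) :=
  stmt_0_general μ s_in s_min Dmin Dmax sbar Dbar G1 hμ hμ0 hDmin hsmin hlow hup hsbar hDbar hG1
    hgain1 hgain2
end

section
/- Assume the bound conditions: D_min < μ(s) for all s ∈ [s_min, s_in], D_max > μ(s) for all s ∈ [0, s_in], and (s̄, D̄) ∈ [s_min, s_in) × [D_min, D_max]; assume the gain condition G1 > max( max_{s∈[0,s_in]}(−μ'(s)), (D̄ − μ(s_in))/(s_in − s̄) ). Let (s_eq, s_in − s_eq) with s_eq ∈ [0, s_in) be the equilibrium of the closed-loop chemostat with feedback u = sat_{[D_min,D_max]}(D̄ − G1(s − s̄)). Then for every solution t ↦ (s(t), b(t)) of the closed-loop chemostat defined on [0, ∞) with initial condition s(0) ∈ [0, s_in) and b(0) > 0, one has (s(t), b(t)) → (s_eq, s_in − s_eq) as t → ∞. -/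
open Set Filter Topology

theorem sat_eq_max_min {Dmin Dmax : ℝ} (h : Dmin ≤ Dmax) (ξ : ℝ) :
    sat Dmin Dmax ξ = max Dmin (min Dmax ξ) := by
  unfold sat
  split_ifs with h₁ h₂
  · rw [min_eq_left h₁.le, max_eq_right h]
  · rw [min_eq_right (by linarith), max_eq_left h₂.le]
  · rw [min_eq_right (not_lt.mp h₁), max_eq_right (not_lt.mp h₂)]

theorem continuous_sat {Dmin Dmax : ℝ} (h : Dmin ≤ Dmax) : Continuous (sat Dmin Dmax) := by
  simp only [funext (sat_eq_max_min h)]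
  fun_prop

theorem le_sat {Dmin Dmax : ℝ} (h : Dmin ≤ Dmax) (ξ : ℝ) : Dmin ≤ sat Dmin Dmax ξ :=
  sat_eq_max_min h ξ ▸ le_max_left _ _

theorem tendsto_atTop_of_le_hasDerivAt {f f' : ℝ → ℝ} {t₀ m : ℝ} (hm : 0 < m)
    (hf : ∀ t ≥ t₀, HasDerivAt f (f' t) t) (hf' : ∀ t ≥ t₀, m ≤ f' t) :
    Tendsto f atTop atTop := by
  have hgrowth : ∀ t ≥ t₀, m * (t - t₀) ≤ f t - f t₀ := by
    refine fun t ht => (convex_Ici t₀).mul_sub_le_image_sub_of_le_deriv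
      (fun x hx => (hf x hx).continuousAt.continuousWithinAt)
      (fun x hx => (hf x (interior_subset hx)).differentiableAt.differentiableWithinAt)
      (fun x hx => (hf x (interior_subset hx)).deriv ▸ hf' x (interior_subset hx))
      t₀ self_mem_Ici t ht ht
  refine tendsto_atTop_mono' atTop ?_ (tendsto_atTop_add_const_right atTop (f t₀ - m * t₀)
    (tendsto_id.const_mul_atTop hm))
  filter_upwards [eventually_ge_atTop t₀] with t ht
  have := hgrowth t ht
  simp only [id]
  linarith

theorem le_mul_exp_of_hasDerivAt_le {f f' : ℝ → ℝ} {m : ℝ}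
    (hf : ∀ t ≥ 0, HasDerivAt f (f' t) t) (hf' : ∀ t ≥ 0, f' t ≤ -m * f t) :
    ∀ t ≥ 0, f t ≤ f 0 * Real.exp (-m * t) := by
  have hg : ∀ t ≥ (0 : ℝ), HasDerivAt (fun t => f t * Real.exp (m * t))
      ((f' t + m * f t) * Real.exp (m * t)) t := fun t ht => by
    refine ((hf t ht).mul (hasDerivAt_const_mul m).exp).congr_deriv ?_
    ring
  have hanti : AntitoneOn (fun t => f t * Real.exp (m * t)) (Ici 0) :=
    antitoneOn_of_deriv_nonpos (convex_Ici 0)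
      (fun x hx => (hg x hx).continuousAt.continuousWithinAt)
      (fun x hx => (hg x (interior_subset hx)).differentiableAt.differentiableWithinAt)
      (fun x hx => (hg x (interior_subset hx)).deriv ▸ mul_nonpos_of_nonpos_of_nonneg
        (by linarith [hf' x (interior_subset hx)]) (Real.exp_pos _).le)
  intro t ht
  have h := hanti self_mem_Ici ht ht
  simp only [mul_zero, Real.exp_zero, mul_one] at h
  rw [neg_mul, Real.exp_neg, ← div_eq_mul_inv, le_div_iff₀ (Real.exp_pos _)]
  exact h

theorem le_of_hasDerivAt_neg_of_eq {f f' : ℝ → ℝ} {t₀ c : ℝ}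
    (hf : ∀ t ≥ t₀, HasDerivAt f (f' t) t) (h₀ : f t₀ ≤ c)
    (hc : ∀ t ≥ t₀, f t = c → f' t < 0) : ∀ t ≥ t₀, f t ≤ c := fun _ ht =>
  image_le_of_deriv_right_lt_deriv_boundary (B := fun _ => c) (B' := 0)
    (fun x hx => (hf x hx.1).continuousAt.continuousWithinAt)
    (fun x hx => (hf x hx.1).hasDerivWithinAt) h₀ (fun _ => hasDerivAt_const _ _)
    (fun x hx => hc x hx.1) ⟨ht, le_rfl⟩

theorem pos_of_hasDerivAt_mul {y c : ℝ → ℝ} (hc : ContinuousOn c (Ici 0))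
    (hy : ∀ t ≥ 0, HasDerivAt y (c t * y t) t) (h₀ : 0 < y 0) : ∀ t ≥ 0, 0 < y t := by
  -- `c` is extended to a continuous function on `ℝ` so that its integral is a primitive.
  set c' : ℝ → ℝ := fun τ => c (max τ 0)
  have hc' : Continuous c' := hc.comp_continuous (by fun_prop) fun τ => le_max_right τ 0
  set C : ℝ → ℝ := fun t => ∫ τ in (0 : ℝ)..t, c' τ
  have hC : ∀ t, HasDerivAt C (c' t) t := fun t =>
    intervalIntegral.integral_hasDerivAt_right (hc'.intervalIntegrable _ _)
      hc'.aestronglyMeasurable.stronglyMeasurableAtFilter hc'.continuousAt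
  have hg : ∀ t ≥ (0 : ℝ), HasDerivAt (fun t => y t * Real.exp (-C t)) 0 t := fun t ht => by
    refine ((hy t ht).mul (hC t).neg.exp).congr_deriv ?_
    rw [show c' t = c t from congrArg c (max_eq_left ht)]
    ring
  intro t ht
  have h := constant_of_has_deriv_right_zero
    (fun x hx => (hg x hx.1).continuousAt.continuousWithinAt)
    (fun x hx => (hg x hx.1).hasDerivWithinAt) t ⟨ht, le_rfl⟩
  simp only [C, intervalIntegral.integral_same, neg_zero, Real.exp_zero, mul_one] at h
  have : 0 < y t * Real.exp (-C t) := h ▸ h₀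
  exact pos_of_mul_pos_left this (Real.exp_pos _).le

def IsChemostatSolution (μ U : ℝ → ℝ) (s_in : ℝ) (s b : ℝ → ℝ) : Prop :=
  ∀ t ≥ (0 : ℝ), HasDerivAt s (-(μ (s t)) * b t + U (s t) * (s_in - s t)) t ∧
    HasDerivAt b (μ (s t) * b t - U (s t) * b t) t

namespace IsChemostatSolution

variable {μ U s b : ℝ → ℝ} {s_in : ℝ}

theorem continuousOn_s (h : IsChemostatSolution μ U s_in s b) : ContinuousOn s (Ici 0) :=
  fun t ht => (h t ht).1.continuousAt.continuousWithinAt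

theorem b_pos (h : IsChemostatSolution μ U s_in s b) (hμ : Continuous μ) (hU : Continuous U)
    (hb0 : 0 < b 0) : ∀ t ≥ 0, 0 < b t :=
  pos_of_hasDerivAt_mul (c := fun t => μ (s t) - U (s t))
    ((hμ.sub hU).comp_continuousOn h.continuousOn_s)
    (fun t ht => (h t ht).2.congr_deriv (by ring)) hb0

theorem s_mem_Icc (h : IsChemostatSolution μ U s_in s b) (hb : ∀ t ≥ 0, 0 < b t)
    (hs_in : 0 < s_in) (hμ0 : μ 0 = 0) (hμs_in : 0 < μ s_in) (hU0 : 0 < U 0)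
    (hs0 : s 0 ∈ Icc 0 s_in) : ∀ t ≥ 0, s t ∈ Icc 0 s_in := by
  intro t ht
  constructor
  · have h0 := le_of_hasDerivAt_neg_of_eq (f := fun t => -s t) (c := 0)
      (fun t ht => (h t ht).1.neg) (by simpa using hs0.1) (fun t _ hst => by
        rw [neg_eq_zero.mp hst, hμ0]
        nlinarith) t ht
    simpa using h0
  · exact le_of_hasDerivAt_neg_of_eq (fun t ht => (h t ht).1) hs0.2 (fun t ht hst => by
      rw [hst, sub_self]
      nlinarith [hb t ht]) t ht

theorem hasDerivAt_add_sub (h : IsChemostatSolution μ U s_in s b) {t : ℝ} (ht : 0 ≤ t) :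
    HasDerivAt (fun t => s t + b t - s_in) (-U (s t) * (s t + b t - s_in)) t :=
  (((h t ht).1.add (h t ht).2).sub_const s_in).congr_deriv (by ring)

theorem hasDerivAt_log_b (h : IsChemostatSolution μ U s_in s b) (hb : ∀ t ≥ 0, 0 < b t)
    {t : ℝ} (ht : 0 ≤ t) : HasDerivAt (fun t => Real.log (b t)) (μ (s t) - U (s t)) t :=
  ((h t ht).2.log (hb t ht).ne').congr_deriv (by field_simp [(hb t ht).ne'])

theorem b_le (h : IsChemostatSolution μ U s_in s b) (hU : ∀ x ∈ Icc 0 s_in, 0 ≤ U x)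
    (hs : ∀ t ≥ 0, s t ∈ Icc 0 s_in) : ∀ t ≥ 0, b t ≤ s_in + |s 0 + b 0 - s_in| := by
  have hsq := le_mul_exp_of_hasDerivAt_le (m := 0)
    (fun t ht => (h.hasDerivAt_add_sub ht).pow 2) (fun t ht => by
      have := hU _ (hs t ht)
      simp only [Nat.cast_ofNat, neg_zero, zero_mul, pow_one, Nat.add_one_sub_one]
      nlinarith [mul_nonneg this (sq_nonneg (s t + b t - s_in))])
  intro t ht
  have habs : |s t + b t - s_in| ≤ |s 0 + b 0 - s_in| := by
    simpa [← sq_le_sq] using hsq t ht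
  linarith [le_abs_self (s t + b t - s_in), (hs t ht).1]

theorem tendsto_add (h : IsChemostatSolution μ U s_in s b) (hμ : Continuous μ)
    (hU : Continuous U) (hμU : ∀ x ∈ Icc 0 s_in, 0 < μ x + U x) (hb : ∀ t ≥ 0, 0 < b t)
    {B : ℝ} (hbB : ∀ t ≥ 0, b t ≤ B) (hs : ∀ t ≥ 0, s t ∈ Icc 0 s_in) :
    Tendsto (fun t => s t + b t) atTop (𝓝 s_in) := by
  obtain ⟨m, hm, hmμU⟩ := isCompact_Icc.exists_forall_le' (hμ.add hU).continuousOn hμU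
  -- `(s + b - s_in)² / b` decays at rate `μ(s) + U(s) ≥ m`, while `b` stays bounded.
  have hdecay := le_mul_exp_of_hasDerivAt_le (m := m)
    (f := fun t => (s t + b t - s_in) ^ 2 / b t)
    (f' := fun t => -(μ (s t) + U (s t)) * ((s t + b t - s_in) ^ 2 / b t))
    (fun t ht => (((h.hasDerivAt_add_sub ht).pow 2).div (h t ht).2 (hb t ht).ne').congr_deriv
      (by simp only [Pi.pow_apply]; field_simp [(hb t ht).ne']; ring))
    (fun t ht => mul_le_mul_of_nonneg_right (neg_le_neg (hmμU _ (hs t ht)))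
      (div_nonneg (sq_nonneg _) (hb t ht).le))
  set C := B * ((s 0 + b 0 - s_in) ^ 2 / b 0)
  have hsq : Tendsto (fun t => (s t + b t - s_in) ^ 2) atTop (𝓝 0) := by
    have hlim : Tendsto (fun t => C * Real.exp (-m * t)) atTop (𝓝 0) := by
      simpa using (Real.tendsto_exp_atBot.comp
        (tendsto_id.const_mul_atTop_of_neg (neg_lt_zero.2 hm))).const_mul C
    refine tendsto_of_tendsto_of_tendsto_of_le_of_le' tendsto_const_nhds hlim
      (Eventually.of_forall fun t => sq_nonneg _) ?_
    filter_upwards [eventually_ge_atTop 0] with t ht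
    calc (s t + b t - s_in) ^ 2 = b t * ((s t + b t - s_in) ^ 2 / b t) := by
          field_simp [(hb t ht).ne']
      _ ≤ B * ((s 0 + b 0 - s_in) ^ 2 / b 0 * Real.exp (-m * t)) :=
          mul_le_mul (hbB t ht) (hdecay t ht) (div_nonneg (sq_nonneg _) (hb t ht).le)
            ((hb t ht).le.trans (hbB t ht))
      _ = C * Real.exp (-m * t) := by ring
  have habs : Tendsto (fun t => |s t + b t - s_in|) atTop (𝓝 0) := by
    simpa [Function.comp_def, Real.sqrt_sq_eq_abs] using (Real.continuous_sqrt.tendsto 0).comp hsq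
  simpa using (tendsto_zero_iff_abs_tendsto_zero _).2 habs |>.add_const s_in

theorem tendsto_log_b_atTop (h : IsChemostatSolution μ U s_in s b) (hμ : Continuous μ)
    (hU : Continuous U) (hb : ∀ t ≥ 0, 0 < b t) {K : Set ℝ} (hK : IsCompact K)
    (hUμ : ∀ x ∈ K, U x < μ x) {t₀ : ℝ} (ht₀ : 0 ≤ t₀) (hsK : ∀ t ≥ t₀, s t ∈ K) :
    Tendsto (fun t => Real.log (b t)) atTop atTop := by
  obtain ⟨m, hm, hmle⟩ :=
    hK.exists_forall_le' (hμ.sub hU).continuousOn fun x hx => sub_pos.2 (hUμ x hx)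
  exact tendsto_atTop_of_le_hasDerivAt hm (fun t ht => h.hasDerivAt_log_b hb (ht₀.trans ht))
    fun t ht => hmle _ (hsK t ht)

theorem tendsto_log_b_atBot (h : IsChemostatSolution μ U s_in s b) (hμ : Continuous μ)
    (hU : Continuous U) (hb : ∀ t ≥ 0, 0 < b t) {K : Set ℝ} (hK : IsCompact K)
    (hμU : ∀ x ∈ K, μ x < U x) {t₀ : ℝ} (ht₀ : 0 ≤ t₀) (hsK : ∀ t ≥ t₀, s t ∈ K) :
    Tendsto (fun t => Real.log (b t)) atTop atBot := by
  obtain ⟨m, hm, hmle⟩ :=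
    hK.exists_forall_le' (hU.sub hμ).continuousOn fun x hx => sub_pos.2 (hμU x hx)
  refine tendsto_neg_atTop_iff.1 (tendsto_atTop_of_le_hasDerivAt hm
    (fun t ht => (h.hasDerivAt_log_b hb (ht₀.trans ht)).neg) fun t ht => ?_)
  simpa using hmle _ (hsK t ht)

theorem eventually_s_le (h : IsChemostatSolution μ U s_in s b) (hμ : Continuous μ)
    (hU : Continuous U) (hb : ∀ t ≥ 0, 0 < b t) {B : ℝ} (hbB : ∀ t ≥ 0, b t ≤ B)
    (hs : ∀ t ≥ 0, s t ∈ Icc 0 s_in) (hsb : Tendsto (fun t => s t + b t) atTop (𝓝 s_in))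
    {s_eq : ℝ} (hseq : 0 ≤ s_eq) (habove : ∀ x ∈ Icc 0 s_in, s_eq < x → U x < μ x)
    {a : ℝ} (ha : s_eq < a) : ∀ᶠ t in atTop, s t ≤ a := by
  rcases le_or_gt s_in a with hs_in | hs_in
  · filter_upwards [eventually_ge_atTop 0] with t ht
    exact (hs t ht).2.trans hs_in
  have hUμ : ∀ x ∈ Icc a s_in, U x < μ x :=
    fun x hx => habove x ⟨hseq.trans (ha.trans_le hx.1).le, hx.2⟩ (ha.trans_le hx.1)
  -- once `s + b` is close to `s_in`, the level `s = a` can only be crossed downwards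
  have hbarrier : ∀ᶠ t in atTop, U a * (s_in - a) < μ a * (s t + b t - a) :=
    ((hsb.sub_const a).const_mul (μ a)).eventually_const_lt
      (mul_lt_mul_of_pos_right (hUμ a ⟨le_rfl, hs_in.le⟩) (sub_pos.2 hs_in))
  obtain ⟨T, hT⟩ := eventually_atTop.1 (hbarrier.and (eventually_ge_atTop 0))
  have hT0 : 0 ≤ T := (hT T le_rfl).2
  obtain ⟨t₁, ht₁T, ht₁⟩ : ∃ t₁ ≥ T, s t₁ ≤ a := by
    by_contra! hgt
    obtain ⟨t, hlog, ht⟩ := ((h.tendsto_log_b_atTop hμ hU hb isCompact_Icc hUμ hT0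
      fun t ht => ⟨(hgt t ht).le, (hs t (hT0.trans ht)).2⟩).eventually_gt_atTop
      (Real.log B) |>.and (eventually_ge_atTop 0)).exists
    linarith [Real.log_le_log (hb t ht) (hbB t ht)]
  filter_upwards [eventually_ge_atTop t₁] with t ht
  refine le_of_hasDerivAt_neg_of_eq (fun t ht => (h t (hT0.trans (ht₁T.trans ht))).1) ht₁
    (fun t ht hst => ?_) t ht
  have := (hT t (ht₁T.trans ht)).1
  rw [hst] at this ⊢
  linarith

theorem le_eventually_s (h : IsChemostatSolution μ U s_in s b) (hμ : Continuous μ)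
    (hU : Continuous U) (hb : ∀ t ≥ 0, 0 < b t) (hs : ∀ t ≥ 0, s t ∈ Icc 0 s_in)
    (hsb : Tendsto (fun t => s t + b t) atTop (𝓝 s_in)) {s_eq : ℝ} (hseq : s_eq < s_in)
    (hbelow : ∀ x ∈ Icc 0 s_in, x < s_eq → μ x < U x)
    {a : ℝ} (ha : a < s_eq) : ∀ᶠ t in atTop, a ≤ s t := by
  rcases lt_or_ge a 0 with ha0 | ha0
  · filter_upwards [eventually_ge_atTop 0] with t ht
    exact ha0.le.trans (hs t ht).1
  have has_in : a < s_in := ha.trans hseq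
  have hμU : ∀ x ∈ Icc 0 a, μ x < U x :=
    fun x hx => hbelow x ⟨hx.1, hx.2.trans has_in.le⟩ (hx.2.trans_lt ha)
  -- once `s + b` is close to `s_in`, the level `s = a` can only be crossed upwards,
  -- and `b` stays away from `0` while `s ≤ a`
  have hbarrier : ∀ᶠ t in atTop, μ a * (s t + b t - a) < U a * (s_in - a) :=
    ((hsb.sub_const a).const_mul (μ a)).eventually_lt_const
      (mul_lt_mul_of_pos_right (hμU a ⟨ha0, le_rfl⟩) (sub_pos.2 has_in))
  have hfar : ∀ᶠ t in atTop, (s_in + a) / 2 < s t + b t :=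
    hsb.eventually_const_lt (by linarith)
  obtain ⟨T, hT⟩ := eventually_atTop.1 ((hbarrier.and hfar).and (eventually_ge_atTop 0))
  have hT0 : 0 ≤ T := (hT T le_rfl).2
  obtain ⟨t₁, ht₁T, ht₁⟩ : ∃ t₁ ≥ T, a ≤ s t₁ := by
    by_contra! hlt
    obtain ⟨t, hlog, ht⟩ := ((h.tendsto_log_b_atBot hμ hU hb isCompact_Icc hμU hT0
      fun t ht => ⟨(hs t (hT0.trans ht)).1, (hlt t ht).le⟩).eventually_lt_atBot
      (Real.log ((s_in - a) / 2)) |>.and (eventually_ge_atTop T)).exists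
    have hbt : (s_in - a) / 2 ≤ b t := by linarith [(hT t ht).1.2, hlt t ht]
    linarith [Real.log_le_log (by linarith) hbt]
  filter_upwards [eventually_ge_atTop t₁] with t ht
  have hneg := le_of_hasDerivAt_neg_of_eq (f := fun t => -s t) (c := -a)
    (fun t ht => (h t (hT0.trans (ht₁T.trans ht))).1.neg) (neg_le_neg ht₁)
    (fun t ht hst => ?_) t ht
  · exact neg_le_neg_iff.1 hneg
  have := (hT t (ht₁T.trans ht)).1.1
  rw [neg_inj.1 hst] at this ⊢
  linarith

theorem tendsto (h : IsChemostatSolution μ U s_in s b) (hμ : Continuous μ) (hU : Continuous U)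
    (hμ0 : μ 0 = 0) (hμpos : ∀ x ∈ Ioc 0 s_in, 0 < μ x) (hU0 : 0 < U 0)
    (hU_nonneg : ∀ x ∈ Icc 0 s_in, 0 ≤ U x) {s_eq : ℝ} (hseq : s_eq ∈ Ico 0 s_in)
    (hbelow : ∀ x ∈ Icc 0 s_in, x < s_eq → μ x < U x)
    (habove : ∀ x ∈ Icc 0 s_in, s_eq < x → U x < μ x)
    (hs0 : s 0 ∈ Icc 0 s_in) (hb0 : 0 < b 0) :
    Tendsto (fun t => (s t, b t)) atTop (𝓝 (s_eq, s_in - s_eq)) := by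
  have hs_in : 0 < s_in := hseq.1.trans_lt hseq.2
  have hb := h.b_pos hμ hU hb0
  have hs := h.s_mem_Icc hb hs_in hμ0 (hμpos s_in ⟨hs_in, le_rfl⟩) hU0 hs0
  have hμU : ∀ x ∈ Icc 0 s_in, 0 < μ x + U x := fun x hx => by
    rcases hx.1.eq_or_lt with rfl | hx0
    · simpa [hμ0] using hU0
    · exact add_pos_of_pos_of_nonneg (hμpos x ⟨hx0, hx.2⟩) (hU_nonneg x hx)
  have hsb := h.tendsto_add hμ hU hμU hb (h.b_le hU_nonneg hs) hs
  have hslim : Tendsto s atTop (𝓝 s_eq) := by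
    refine tendsto_order.2 ⟨fun a ha => ?_, fun a ha => ?_⟩
    · obtain ⟨a', haa', ha'⟩ := exists_between ha
      exact (h.le_eventually_s hμ hU hb hs hsb hseq.2 hbelow ha').mono
        fun t ht => haa'.trans_le ht
    · obtain ⟨a', ha', ha'a⟩ := exists_between ha
      exact (h.eventually_s_le hμ hU hb (h.b_le hU_nonneg hs) hs hsb hseq.1 habove ha').mono
        fun t ht => ht.trans_lt ha'a
  refine hslim.prodMk_nhds ?_
  simpa using hsb.sub hslim

end IsChemostatSolution

section SaturatedFeedback

variable {μ : ℝ → ℝ} {s_in s_min Dmin Dmax sbar Dbar G1 : ℝ}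

theorem sat_feedback_zero_pos (hμ0 : μ 0 = 0) (hDmin : 0 ≤ Dmin) (hDD : Dmin < Dmax)
    (hsmin : 0 ≤ s_min) (hlow : ∀ x ∈ Icc s_min s_in, Dmin < μ x)
    (hsbar : sbar ∈ Ico s_min s_in) (hDbar : Dmin ≤ Dbar) (hG1 : 0 < G1) :
    0 < sat Dmin Dmax (Dbar - G1 * (0 - sbar)) := by
  rw [sat_eq_max_min hDD.le]
  by_cases hξ : Dmin < Dbar - G1 * (0 - sbar)
  · exact hDmin.trans_lt (lt_max_of_lt_right (lt_min hDD hξ))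
  · -- otherwise `sbar = s_min = 0`, and `hlow` at `0` contradicts `μ 0 = 0 ≤ Dmin`
    have hsbar0 : sbar ≤ 0 := by nlinarith
    have := hlow 0 ⟨by linarith [hsbar.1], by linarith [hsbar.1, hsbar.2]⟩
    linarith

theorem strictMonoOn_add_mul (hμ : ContDiff ℝ 1 μ) (hgain : ∀ x ∈ Icc 0 s_in, -deriv μ x < G1) :
    StrictMonoOn (fun x => μ x + G1 * x) (Icc 0 s_in) := by
  refine strictMonoOn_of_deriv_pos (convex_Icc 0 s_in)
    (hμ.continuous.add (by fun_prop)).continuousOn fun x hx => ?_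
  rw [interior_Icc] at hx
  have hd : HasDerivAt (fun x => μ x + G1 * x) (deriv μ x + G1) x :=
    ((hμ.differentiable one_ne_zero x).hasDerivAt.add (hasDerivAt_const_mul G1)).congr_deriv
      (by ring)
  rw [hd.deriv]
  linarith [hgain x (Ioo_subset_Icc_self hx)]

theorem eq_of_eq_sat (hDD : Dmin < Dmax) (hlow : ∀ x ∈ Icc s_min s_in, Dmin < μ x)
    (hup : ∀ x ∈ Icc 0 s_in, μ x < Dmax) (hsbar : s_min ≤ sbar) (hDbar : Dmin ≤ Dbar)
    (hG1 : 0 < G1) {s_eq : ℝ} (hseq_mem : s_eq ∈ Icc 0 s_in)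
    (hseq : μ s_eq = sat Dmin Dmax (Dbar - G1 * (s_eq - sbar))) :
    μ s_eq = Dbar - G1 * (s_eq - sbar) := by
  rw [sat_eq_max_min hDD.le] at hseq
  rcases le_or_gt Dmin (Dbar - G1 * (s_eq - sbar)) with hξ | hξ
  · rw [max_eq_right (le_min hDD.le hξ)] at hseq
    rcases le_or_gt Dmax (Dbar - G1 * (s_eq - sbar)) with hξ' | hξ'
    · linarith [min_eq_left hξ', hup s_eq hseq_mem]
    · rwa [min_eq_right hξ'.le] at hseq
  · have : sbar < s_eq := by nlinarith
    linarith [max_eq_left ((min_le_right Dmax _).trans hξ.le), hlow s_eq ⟨by linarith, hseq_mem.2⟩]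

theorem lt_sat_feedback (hμ : ContDiff ℝ 1 μ) (hDD : Dmin < Dmax)
    (hup : ∀ x ∈ Icc 0 s_in, μ x < Dmax) (hgain : ∀ x ∈ Icc 0 s_in, -deriv μ x < G1)
    {s_eq : ℝ} (hseq_mem : s_eq ∈ Icc 0 s_in) (hseq : μ s_eq = Dbar - G1 * (s_eq - sbar))
    {x : ℝ} (hx : x ∈ Icc 0 s_in) (hxs : x < s_eq) :
    μ x < sat Dmin Dmax (Dbar - G1 * (x - sbar)) := by
  have := strictMonoOn_add_mul hμ hgain hx hseq_mem hxs
  rw [sat_eq_max_min hDD.le]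
  exact lt_max_of_lt_right (lt_min (hup x hx) (by linarith))

theorem sat_feedback_lt (hμ : ContDiff ℝ 1 μ) (hDD : Dmin < Dmax)
    (hlow : ∀ x ∈ Icc s_min s_in, Dmin < μ x) (hsbar : s_min ≤ sbar) (hDbar : Dmin ≤ Dbar)
    (hG1 : 0 < G1) (hgain : ∀ x ∈ Icc 0 s_in, -deriv μ x < G1) {s_eq : ℝ}
    (hseq_mem : s_eq ∈ Icc 0 s_in) (hseq : μ s_eq = Dbar - G1 * (s_eq - sbar))
    {x : ℝ} (hx : x ∈ Icc 0 s_in) (hxs : s_eq < x) :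
    sat Dmin Dmax (Dbar - G1 * (x - sbar)) < μ x := by
  have := strictMonoOn_add_mul hμ hgain hseq_mem hx hxs
  rw [sat_eq_max_min hDD.le]
  by_cases hξ : Dmin ≤ Dbar - G1 * (x - sbar)
  · exact (max_le hξ (min_le_right _ _)).trans_lt (by linarith)
  · have : sbar < x := by nlinarith
    exact max_lt (hlow x ⟨by linarith, hx.2⟩)
      (((min_le_right _ _).trans (not_le.1 hξ).le).trans_lt (hlow x ⟨by linarith, hx.2⟩))

end SaturatedFeedback

theorem stmt_1_general
    (μ : ℝ → ℝ) (s_in s_min Dmin Dmax sbar Dbar G1 : ℝ)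
    (hμ : ContDiff ℝ 1 μ) (hμ0 : μ 0 = 0)
    (hμpos : ∀ x ∈ Set.Ioc 0 s_in, 0 < μ x)
    (hDmin : 0 ≤ Dmin) (hDD : Dmin < Dmax)
    (hsmin : 0 ≤ s_min)
    (hlow : ∀ x ∈ Set.Icc s_min s_in, Dmin < μ x)
    (hup : ∀ x ∈ Set.Icc 0 s_in, μ x < Dmax)
    (hsbar : sbar ∈ Set.Ico s_min s_in)
    (hDbar : Dbar ∈ Set.Icc Dmin Dmax)
    (hG1 : 0 < G1)
    (hgain1 : ∀ x ∈ Set.Icc 0 s_in, -deriv μ x < G1)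
    -- the closed-loop equilibrium
    (s_eq : ℝ) (hseq_mem : s_eq ∈ Set.Ico 0 s_in)
    (hseq : μ s_eq = sat Dmin Dmax (Dbar - G1 * (s_eq - sbar)))
    -- a solution of the closed-loop chemostat on [0,∞)
    (s b : ℝ → ℝ)
    (hsol : ∀ t ≥ (0:ℝ),
      HasDerivAt s
        (-(μ (s t)) * b t
          + sat Dmin Dmax (Dbar - G1 * (s t - sbar)) * (s_in - s t)) t ∧
      HasDerivAt b
        (μ (s t) * b t - sat Dmin Dmax (Dbar - G1 * (s t - sbar)) * b t) t)
    (hs0 : s 0 ∈ Set.Ico 0 s_in) (hb0 : 0 < b 0) :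
    Filter.Tendsto (fun t => (s t, b t)) Filter.atTop
      (nhds (s_eq, s_in - s_eq)) := by
  have hseq_Icc : s_eq ∈ Icc 0 s_in := Ico_subset_Icc_self hseq_mem
  have hseq' := eq_of_eq_sat hDD hlow hup hsbar.1 hDbar.1 hG1 hseq_Icc hseq
  have hsol' : IsChemostatSolution μ (fun x => sat Dmin Dmax (Dbar - G1 * (x - sbar))) s_in s b :=
    hsol
  exact hsol'.tendsto hμ.continuous
    ((continuous_sat hDD.le).comp (by fun_prop)) hμ0 hμpos
    (sat_feedback_zero_pos hμ0 hDmin hDD hsmin hlow hsbar hDbar.1 hG1)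
    (fun x _ => hDmin.trans (le_sat hDD.le _)) hseq_mem
    (fun x hx hxs => lt_sat_feedback hμ hDD hup hgain1 hseq_Icc hseq' hx hxs)
    (fun x hx hxs => sat_feedback_lt hμ hDD hlow hsbar.1 hDbar.1 hG1 hgain1 hseq_Icc hseq' hx hxs)
    (Ico_subset_Icc_self hs0) hb0

/-- Global attractivity of the closed-loop equilibrium of the chemostat with
saturated proportional feedback (Proposition 1, convergence part). -/
theorem stmt_1
    (μ : ℝ → ℝ) (s_in s_min Dmin Dmax sbar Dbar G1 : ℝ)
    (hμ : ContDiff ℝ 1 μ) (hμ0 : μ 0 = 0)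
    (hμpos : ∀ x ∈ Set.Ioc 0 s_in, 0 < μ x)
    (hsin : 0 < s_in)
    (hDmin : 0 ≤ Dmin) (hDD : Dmin < Dmax)
    (hsmin : 0 ≤ s_min) (hsminlt : s_min < s_in)
    (hlow : ∀ x ∈ Set.Icc s_min s_in, Dmin < μ x)
    (hup : ∀ x ∈ Set.Icc 0 s_in, μ x < Dmax)
    (hsbar : sbar ∈ Set.Ico s_min s_in)
    (hDbar : Dbar ∈ Set.Icc Dmin Dmax)
    (hG1 : 0 < G1)
    (hgain1 : ∀ x ∈ Set.Icc 0 s_in, -deriv μ x < G1)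
    (hgain2 : (Dbar - μ s_in) / (s_in - sbar) < G1)
    -- the closed-loop equilibrium
    (s_eq : ℝ) (hseq_mem : s_eq ∈ Set.Ico 0 s_in)
    (hseq : μ s_eq = sat Dmin Dmax (Dbar - G1 * (s_eq - sbar)))
    -- a solution of the closed-loop chemostat on [0,∞)
    (s b : ℝ → ℝ)
    (hsol : ∀ t ≥ (0:ℝ),
      HasDerivAt s
        (-(μ (s t)) * b t
          + sat Dmin Dmax (Dbar - G1 * (s t - sbar)) * (s_in - s t)) t ∧
      HasDerivAt b
        (μ (s t) * b t - sat Dmin Dmax (Dbar - G1 * (s t - sbar)) * b t) t)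
    (hs0 : s 0 ∈ Set.Ico 0 s_in) (hb0 : 0 < b 0) :
    Filter.Tendsto (fun t => (s t, b t)) Filter.atTop
      (nhds (s_eq, s_in - s_eq)) :=
  stmt_1_general μ s_in s_min Dmin Dmax sbar Dbar G1 hμ hμ0 hμpos hDmin hDD hsmin hlow hup hsbar
    hDbar hG1 hgain1 s_eq hseq_mem hseq s b hsol hs0 hb0
end

section
/- Let u : [0,∞) → ℝ be continuous with 0 ≤ u(t) for all t ≥ 0, and assume additionally μ(s) ≥ 0 for all s ≥ 0. Then the region [0, s_in] × [0, ∞) is positively invariant for the chemostat with time-varying input u(t): every solution t ↦ (s(t), b(t)) on [0,∞) with s(0) ∈ [0, s_in] and b(0) ≥ 0 satisfies s(t) ∈ [0, s_in] and b(t) ≥ 0 for all t ≥ 0. -/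
/-!
Each of the three bounds says that a function `v` (namely `-b`, `-s` and `s - s_in`) with
`v 0 ≤ 0` and `v' ≤ K v` wherever `v ≥ 0` stays nonpositive; this follows by comparing `v`
with the barriers `ε e^{(K+1)t}`. The biomass equation is linear in `b`, so for `-b` one can take
`K = sup μ(s)` (the outflow `u b` only helps). Where `s ≤ 0`, the consumption `μ(s) b` is
`O(|s|)` because `μ` is `C¹` with `μ 0 = 0`, and the inflow `u (s_in - s)` is nonnegative.
Where `s ≥ s_in ≥ 0`, both terms of `s'` are nonpositive since `μ ≥ 0` and `b ≥ 0`.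
-/

open Set Real

theorem nonpos_of_deriv_le_mul_of_nonneg {v v' : ℝ → ℝ} {K a b : ℝ}
    (hv : ContinuousOn v (Icc a b))
    (hv' : ∀ t ∈ Ico a b, HasDerivWithinAt v (v' t) (Ici t) t)
    (hK : ∀ t ∈ Ico a b, 0 ≤ v t → v' t ≤ K * v t) (ha : v a ≤ 0) :
    ∀ t ∈ Icc a b, v t ≤ 0 := by
  intro t ht
  have barrier : ∀ ε > 0, v t ≤ ε * exp ((K + 1) * (t - a)) := by
    intro ε hε
    have hB : ∀ x, HasDerivAt (fun x => ε * exp ((K + 1) * (x - a)))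
        ((K + 1) * (ε * exp ((K + 1) * (x - a)))) x := fun x =>
      ((((hasDerivAt_id x).sub_const a).const_mul (K + 1)).exp.const_mul ε).congr_deriv
        (by simp only [id, mul_one]; ring)
    refine image_le_of_deriv_right_lt_deriv_boundary' hv hv' ?_
      (fun x _ => (hB x).continuousAt.continuousWithinAt) (fun x _ => (hB x).hasDerivWithinAt)
      ?_ ht
    · simpa using ha.trans hε.le
    · intro x hx hvx
      have hpos : 0 < ε * exp ((K + 1) * (x - a)) := by positivity
      have := hK x hx (hvx ▸ hpos.le)
      rw [hvx] at this
      linarith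
  by_contra! hpos
  have hE := exp_pos ((K + 1) * (t - a))
  have := barrier (v t / (2 * exp ((K + 1) * (t - a)))) (by positivity)
  rw [div_mul_eq_mul_div, mul_div_mul_right _ _ hE.ne'] at this
  linarith

theorem nonpos_of_hasDerivAt_le_mul_of_nonneg {v v' : ℝ → ℝ}
    (hv : ∀ t ≥ 0, HasDerivAt v (v' t) t)
    (hK : ∀ T, ∃ K, ∀ t ∈ Icc 0 T, 0 ≤ v t → v' t ≤ K * v t) (h0 : v 0 ≤ 0) :
    ∀ t ≥ 0, v t ≤ 0 := by
  intro T hT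
  obtain ⟨K, hK⟩ := hK T
  exact nonpos_of_deriv_le_mul_of_nonneg (K := K)
    (fun t ht => (hv t ht.1).continuousAt.continuousWithinAt)
    (fun t ht => (hv t ht.1).hasDerivWithinAt) (fun t ht => hK t (Ico_subset_Icc_self ht)) h0
    T ⟨hT, le_rfl⟩

theorem exists_abs_le_mul_abs_of_contDiff {f : ℝ → ℝ} (hf : ContDiff ℝ 1 f) (hf0 : f 0 = 0)
    (M : ℝ) : ∃ L : NNReal, ∀ y, |y| ≤ M → |f y| ≤ L * |y| := by
  obtain ⟨L, hL⟩ := hf.contDiffOn.exists_lipschitzOnWith one_ne_zero (convex_closedBall 0 M)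
    (isCompact_closedBall 0 M)
  refine ⟨L, fun y hy => ?_⟩
  have hy' : y ∈ Metric.closedBall (0 : ℝ) M := by simpa using hy
  have h0 : (0 : ℝ) ∈ Metric.closedBall (0 : ℝ) M := by simpa using (abs_nonneg y).trans hy
  simpa [Real.dist_eq, hf0] using hL.dist_le_mul y hy' 0 h0

theorem exists_abs_le_on_Icc_of_continuousAt {f : ℝ → ℝ} (hf : ∀ t ≥ 0, ContinuousAt f t)
    (T : ℝ) :
    ∃ M, ∀ t ∈ Icc 0 T, |f t| ≤ M :=
  isCompact_Icc.exists_bound_of_continuousOn fun t ht => (hf t ht.1).continuousWithinAt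

section Chemostat

variable {μ u s b : ℝ → ℝ} {s_in : ℝ}

theorem chemostat_biomass_nonneg (hμ : Continuous μ) (hu : ∀ t ≥ 0, 0 ≤ u t)
    (hs : ∀ t ≥ 0, ContinuousAt s t)
    (hb : ∀ t ≥ 0, HasDerivAt b (μ (s t) * b t - u t * b t) t) (hb0 : 0 ≤ b 0) :
    ∀ t ≥ 0, 0 ≤ b t := by
  have key := nonpos_of_hasDerivAt_le_mul_of_nonneg (v := -b) (fun t ht => (hb t ht).neg)
    (fun T => ?_) (by simpa using hb0)
  · intro t ht
    simpa using key t ht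
  obtain ⟨K, hK⟩ :=
    exists_abs_le_on_Icc_of_continuousAt (fun t ht => hμ.continuousAt.comp (hs t ht)) T
  refine ⟨K, fun t ht hbt => ?_⟩
  have hμK : μ (s t) ≤ K := (le_abs_self _).trans (hK t ht)
  simp only [Pi.neg_apply] at hbt ⊢
  nlinarith [mul_le_mul_of_nonneg_right hμK hbt, mul_nonneg (hu t ht.1) hbt]

theorem chemostat_substrate_nonneg (hμ : ContDiff ℝ 1 μ) (hμ0 : μ 0 = 0)
    (hu : ∀ t ≥ 0, 0 ≤ u t) (hs_in : 0 ≤ s_in)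
    (hs : ∀ t ≥ 0, HasDerivAt s (-(μ (s t)) * b t + u t * (s_in - s t)) t)
    (hb : ∀ t ≥ 0, ContinuousAt b t) (hb_nonneg : ∀ t ≥ 0, 0 ≤ b t) (hs0 : 0 ≤ s 0) :
    ∀ t ≥ 0, 0 ≤ s t := by
  have key := nonpos_of_hasDerivAt_le_mul_of_nonneg (v := -s) (fun t ht => (hs t ht).neg)
    (fun T => ?_) (by simpa using hs0)
  · intro t ht
    simpa using key t ht
  obtain ⟨M, hM⟩ := exists_abs_le_on_Icc_of_continuousAt (fun t ht => (hs t ht).continuousAt) T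
  obtain ⟨B, hB⟩ := exists_abs_le_on_Icc_of_continuousAt hb T
  obtain ⟨L, hL⟩ := exists_abs_le_mul_abs_of_contDiff hμ hμ0 M
  refine ⟨L * B, fun t ht hst => ?_⟩
  simp only [Pi.neg_apply, neg_nonneg] at hst ⊢
  have hbt := hb_nonneg t ht.1
  have hμs : μ (s t) ≤ L * -s t := by
    simpa [abs_of_nonpos hst] using (le_abs_self _).trans (hL (s t) (hM t ht))
  have hconsume : μ (s t) * b t ≤ L * B * -s t := calc
    μ (s t) * b t ≤ L * -s t * b t := mul_le_mul_of_nonneg_right hμs hbt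
    _ ≤ L * -s t * B := by
      gcongr
      · exact mul_nonneg L.2 (neg_nonneg.2 hst)
      · exact (le_abs_self _).trans (hB t ht)
    _ = L * B * -s t := by ring
  nlinarith [mul_nonneg (hu t ht.1) (by linarith : 0 ≤ s_in - s t)]

theorem chemostat_substrate_le (hμ : ∀ x ≥ 0, 0 ≤ μ x) (hu : ∀ t ≥ 0, 0 ≤ u t)
    (hs_in : 0 ≤ s_in)
    (hs : ∀ t ≥ 0, HasDerivAt s (-(μ (s t)) * b t + u t * (s_in - s t)) t)
    (hb_nonneg : ∀ t ≥ 0, 0 ≤ b t) (hs0 : s 0 ≤ s_in) :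
    ∀ t ≥ 0, s t ≤ s_in := by
  have key := nonpos_of_hasDerivAt_le_mul_of_nonneg (v := fun t => s t - s_in)
    (fun t ht => (hs t ht).sub_const s_in) (fun _ => ⟨0, fun t ht hst => ?_⟩)
    (by simpa using hs0)
  · intro t ht
    simpa using key t ht
  rw [sub_nonneg] at hst
  nlinarith [mul_nonneg (hμ (s t) (hs_in.trans hst)) (hb_nonneg t ht.1),
    mul_nonneg (hu t ht.1) (by linarith : 0 ≤ s t - s_in)]

end Chemostat

theorem stmt_6_general
    (μ : ℝ → ℝ) (s_in : ℝ)
    (hμ : ContDiff ℝ 1 μ) (hμ0 : μ 0 = 0)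
    (hμnonneg : ∀ x ≥ (0:ℝ), 0 ≤ μ x)
    (u s b : ℝ → ℝ)
    (hunonneg : ∀ t ≥ (0:ℝ), 0 ≤ u t)
    (hsol : ∀ t ≥ (0:ℝ),
      HasDerivAt s (-(μ (s t)) * b t + u t * (s_in - s t)) t ∧
      HasDerivAt b (μ (s t) * b t - u t * b t) t)
    (hs0 : s 0 ∈ Set.Icc 0 s_in) (hb0 : 0 ≤ b 0) :
    ∀ t ≥ (0:ℝ), s t ∈ Set.Icc 0 s_in ∧ 0 ≤ b t := by
  have hs_in : 0 ≤ s_in := hs0.1.trans hs0.2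
  have hb_nonneg := chemostat_biomass_nonneg hμ.continuous hunonneg
    (fun t ht => (hsol t ht).1.continuousAt) (fun t ht => (hsol t ht).2) hb0
  intro t ht
  refine ⟨⟨?_, ?_⟩, hb_nonneg t ht⟩
  · exact chemostat_substrate_nonneg hμ hμ0 hunonneg hs_in (fun t ht => (hsol t ht).1)
      (fun t ht => (hsol t ht).2.continuousAt) hb_nonneg hs0.1 t ht
  · exact chemostat_substrate_le hμnonneg hunonneg hs_in (fun t ht => (hsol t ht).1)
      hb_nonneg hs0.2 t ht

/-- Positive invariance of the region `[0, s_in] × [0, ∞)` for the chemostat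
with nonnegative time-varying input. -/
theorem stmt_6
    (μ : ℝ → ℝ) (s_in : ℝ)
    (hμ : ContDiff ℝ 1 μ) (hμ0 : μ 0 = 0)
    (hμpos : ∀ x ∈ Set.Ioc 0 s_in, 0 < μ x) (hsin : 0 < s_in)
    (hμnonneg : ∀ x ≥ (0:ℝ), 0 ≤ μ x)
    (u s b : ℝ → ℝ) (hu : ContinuousOn u (Set.Ici 0))
    (hunonneg : ∀ t ≥ (0:ℝ), 0 ≤ u t)
    (hsol : ∀ t ≥ (0:ℝ),
      HasDerivAt s (-(μ (s t)) * b t + u t * (s_in - s t)) t ∧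
      HasDerivAt b (μ (s t) * b t - u t * b t) t)
    (hs0 : s 0 ∈ Set.Icc 0 s_in) (hb0 : 0 ≤ b 0) :
    ∀ t ≥ (0:ℝ), s t ∈ Set.Icc 0 s_in ∧ 0 ≤ b t :=
  stmt_6_general μ s_in hμ hμ0 hμnonneg u s b hunonneg hsol hs0 hb0
end

section
/- Let a, d, b, g be positive real numbers. Then the real 3×3 matrix J = [[−a−d, −d, b], [a, 0, −b], [−g, 0, 0]] is Hurwitz: every (complex) eigenvalue of J has negative real part. Equivalently, every complex root of the polynomial λ³ + (a+d)·λ² + (a·d + b·g)·λ + d·b·g has negative real part. (This matrix is the Jacobian of the extended closed-loop chemostat at the equilibrium (s̄, s_in−s̄, μ(s̄)), with a = (G1 + μ'(s̄))·(s_in − s̄), d = μ(s̄), b = s_in − s̄, g = G2·(μ(s̄) − D_min)·(D_max − μ(s̄)).) -/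
/-!
The characteristic polynomial of the matrix is the cubic `X³ + pX² + qX + r` with
`p = a + d`, `q = ad + bg`, `r = dbg`, and `pq - r = a(ad + bg + d²) > 0`, so the
Routh–Hurwitz condition for cubics applies. For that condition, write a root as `x + iy`
with `x ≥ 0`: if `y = 0` the cubic is positive at `x`; otherwise the imaginary part gives
`y² = 3x² + 2px + q`, and substituting this into the real part leaves
`8x³ + 8px² + 2(p² + q)x + (pq - r) = 0`, whose left side is positive.
-/

open Polynomial

theorem re_lt_zero_of_cubic_eq_zero {p q r : ℝ} (hp : 0 < p) (hr : 0 < r) (hpq : r < p * q)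
    {z : ℂ} (hz : z ^ 3 + p * z ^ 2 + q * z + r = 0) : z.re < 0 := by
  have hre := congrArg Complex.re hz
  have him := congrArg Complex.im hz
  simp only [Complex.add_re, Complex.add_im, Complex.mul_re, Complex.mul_im,
    Complex.ofReal_re, Complex.ofReal_im, Complex.zero_re, Complex.zero_im,
    pow_succ, pow_zero, one_mul] at hre him
  set x := z.re
  set y := z.im
  have hq : 0 < q := pos_of_mul_pos_right (hr.trans hpq) hp.le
  by_contra! hx
  have him' : y * (3 * x ^ 2 - y ^ 2 + 2 * p * x + q) = 0 := by linear_combination him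
  rcases mul_eq_zero.mp him' with hy | hy
  · have hreal : x ^ 3 + p * x ^ 2 + q * x + r = 0 := by
      simp only [hy] at hre
      linear_combination hre
    nlinarith [pow_nonneg hx 3, mul_nonneg hp.le (sq_nonneg x), mul_nonneg hq.le hx]
  · have hreduced : 8 * x ^ 3 + 8 * p * x ^ 2 + 2 * (p ^ 2 + q) * x + (p * q - r) = 0 := by
      linear_combination -hre + (3 * x + p) * hy
    nlinarith [pow_nonneg hx 3, mul_nonneg hp.le (sq_nonneg x),
      mul_nonneg (add_pos (pow_pos hp 2) hq).le hx]

theorem charpoly_chemostat_jacobian {R : Type*} [CommRing R] (a d b g : R) :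
    (!![-a - d, -d, b; a, 0, -b; -g, 0, 0] : Matrix (Fin 3) (Fin 3) R).charpoly =
      X ^ 3 + C (a + d) * X ^ 2 + C (a * d + b * g) * X + C (d * b * g) := by
  simp only [Matrix.charpoly, Matrix.det_fin_three, Matrix.charmatrix_apply, Matrix.of_apply,
    Matrix.cons_val', Matrix.cons_val_zero, Matrix.cons_val_one, Matrix.cons_val,
    Matrix.cons_val_fin_one, Matrix.diagonal_apply, Fin.reduceEq, if_true, if_false, map_sub,
    map_neg, map_zero, map_add, map_mul]
  ring

theorem Matrix.mem_spectrum_map_ofReal_iff {n : Type*} [Fintype n] [DecidableEq n]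
    (A : Matrix n n ℝ) (z : ℂ) :
    z ∈ spectrum ℂ (A.map (Complex.ofReal ·)) ↔ aeval z A.charpoly = 0 := by
  rw [aeval_def, eval₂_eq_eval_map, ← Matrix.charpoly_map]
  exact Matrix.mem_spectrum_iff_isRoot_charpoly

/-- The Jacobian of the extended closed-loop chemostat at its equilibrium is
Hurwitz: all complex eigenvalues of `[[-a-d, -d, b], [a, 0, -b], [-g, 0, 0]]`
(with `a, d, b, g > 0`) have negative real part; equivalently all roots of
`λ³ + (a+d)λ² + (ad + bg)λ + dbg` have negative real part. -/
theorem stmt_11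
    (a d b g : ℝ) (ha : 0 < a) (hd : 0 < d) (hb : 0 < b) (hg : 0 < g) :
    (∀ z ∈ spectrum ℂ
        ((!![-a - d, -d, b; a, 0, -b; -g, 0, 0] :
            Matrix (Fin 3) (Fin 3) ℝ).map (Complex.ofReal ·)),
      z.re < 0) ∧
    (∀ z : ℂ,
      z ^ 3 + ((a : ℂ) + d) * z ^ 2 + ((a : ℂ) * d + b * g) * z
          + (d : ℂ) * b * g = 0 →
      z.re < 0) := by
  have hpq : d * b * g < (a + d) * (a * d + b * g) := by
    nlinarith [mul_pos ha (by positivity : 0 < a * d + b * g + d * d)]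
  have hroots : ∀ z : ℂ, z ^ 3 + ((a : ℂ) + d) * z ^ 2 + ((a : ℂ) * d + b * g) * z
      + (d : ℂ) * b * g = 0 → z.re < 0 := fun z hz =>
    re_lt_zero_of_cubic_eq_zero (by positivity) (by positivity) hpq (by push_cast; exact hz)
  refine ⟨fun z hz => hroots z ?_, hroots⟩
  rw [Matrix.mem_spectrum_map_ofReal_iff, charpoly_chemostat_jacobian] at hz
  simpa using hz
end
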